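/- arXiv:1706.10034 — 2 statements merged into one kernel-verified Lean document; each statement's English description precedes it below -/
import Mathlib

section
/- Let N ≥ 1 and let u₀, v₀ ∈ L¹(ℝ^N) satisfy ∫_{ℝ^N} u₀(x) dx = ∫_{ℝ^N} v₀(x) dx. Let u(x,t) = ∫_{ℝ^N} G_t(x−y) u₀(y) dy and v(x,t) = ∫_{ℝ^N} G_t(x−y) v₀(y) dy be the corresponding solutions of the heat equation. Then ‖u(·,t) − v(·,t)‖_{L¹(ℝ^N)} → 0 as t → ∞. -/
/-!
With `w = u₀ - v₀` of mass zero, `u - v = G_t ⋆ w` equals `∫ (G_t (x - y) - G_t x) w y dy`, so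
`‖u(t) - v(t)‖₁ ≤ ∫ |w y| ‖G_t(· - y) - G_t‖₁ dy`. Parabolic scaling turns the translation
distance `‖G_t(· - y) - G_t‖₁` into `‖G_1(· - y/√t) - G_1‖₁`, which is at most `2` and tends to
`0` as `t → ∞` by continuity of translation, the translates of `G_1` by `‖a‖ ≤ 1` being dominated
by a multiple of `G_2`. Dominated convergence in `y` concludes.
-/

open MeasureTheory Real Filter

/-- The Gaussian heat kernel on `ℝ^N`: `G_t(x) = (4πt)^{-N/2} exp(-|x|²/(4t))`. -/
noncomputable def heatKernel (N : ℕ) (t : ℝ) (x : EuclideanSpace ℝ (Fin N)) : ℝ :=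
  (4 * π * t) ^ (-(N : ℝ) / 2) * exp (-‖x‖ ^ 2 / (4 * t))

/-- The solution of the heat equation with initial data `u₀`, given by convolution
with the heat kernel: `u(x,t) = ∫ G_t(x-y) u₀(y) dy`. -/
noncomputable def heatSol (N : ℕ) (u₀ : EuclideanSpace ℝ (Fin N) → ℝ)
    (x : EuclideanSpace ℝ (Fin N)) (t : ℝ) : ℝ :=
  ∫ y, heatKernel N t (x - y) * u₀ y

open Topology

section TranslateL1Dist

variable {E : Type*} [NormedAddCommGroup E] [MeasurableSpace E] (μ : Measure E)

noncomputable def translateL1Dist (K : E → ℝ) (y : E) : ℝ :=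
  ∫ x, |K (x - y) - K x| ∂μ

theorem translateL1Dist_nonneg (K : E → ℝ) (y : E) : 0 ≤ translateL1Dist μ K y :=
  integral_nonneg fun _ => abs_nonneg _

variable {μ}

theorem translateL1Dist_const_mul (c : ℝ) (K : E → ℝ) (y : E) :
    translateL1Dist μ (fun x => c * K x) y = |c| * translateL1Dist μ K y := by
  simp only [translateL1Dist, ← mul_sub, abs_mul, integral_const_mul]

theorem translateL1Dist_comp_smul [BorelSpace E] [NormedSpace ℝ E] [FiniteDimensional ℝ E]
    [μ.IsAddHaarMeasure] (K : E → ℝ) {r : ℝ} (hr : 0 ≤ r) (y : E) :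
    translateL1Dist μ (fun x => K (r • x)) y
      = (r ^ Module.finrank ℝ E)⁻¹ * translateL1Dist μ K (r • y) := by
  simp only [translateL1Dist, smul_sub, ← smul_eq_mul (a := (r ^ _)⁻¹)]
  exact Measure.integral_comp_smul_of_nonneg μ (fun x => |K (x - r • y) - K x|) r (hR := hr)

theorem translateL1Dist_le [BorelSpace E] [μ.IsAddRightInvariant] {K : E → ℝ}
    (hK : Integrable K μ) (y : E) :
    translateL1Dist μ K y ≤ 2 * ∫ x, |K x| ∂μ := by
  have hKy : Integrable (fun x => K (x - y)) μ := hK.comp_sub_right y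
  calc translateL1Dist μ K y ≤ ∫ x, (|K (x - y)| + |K x|) ∂μ :=
        integral_mono (hKy.sub hK).abs (hKy.abs.add hK.abs) fun x => abs_sub _ _
    _ = 2 * ∫ x, |K x| ∂μ := by
        rw [integral_add hKy.abs hK.abs, integral_sub_right_eq_self (fun x => |K x|) y]
        ring

theorem stronglyMeasurable_translateL1Dist [BorelSpace E] [SecondCountableTopology E] [SFinite μ]
    {K : E → ℝ} (hK : Continuous K) :
    StronglyMeasurable (translateL1Dist μ K) :=
  Continuous.stronglyMeasurable (f := fun p : E × E => |K (p.1 - p.2) - K p.1|)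
    (by fun_prop) |>.integral_prod_left'

theorem tendsto_translateL1Dist_zero [BorelSpace E] {K g : E → ℝ} (hK : Continuous K)
    (hg : Integrable g μ) (hKg : ∀ᶠ a in 𝓝 0, ∀ z, |K (z - a)| ≤ g z) :
    Tendsto (translateL1Dist μ K) (𝓝 0) (𝓝 0) := by
  rw [← integral_zero E ℝ]
  refine tendsto_integral_filter_of_dominated_convergence (2 * g)
    (.of_forall fun a => (Continuous.aestronglyMeasurable (by fun_prop))) ?_ (hg.const_mul 2) ?_
  · filter_upwards [hKg] with a ha
    refine .of_forall fun z => ?_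
    have h0 : |K z| ≤ g z := by simpa using hKg.self_of_nhds z
    calc ‖|K (z - a) - K z|‖ ≤ |K (z - a)| + |K z| := by
          rw [norm_abs_eq_norm]; exact abs_sub _ _
      _ ≤ (2 * g) z := by simp only [Pi.mul_apply, Pi.ofNat_apply]; linarith [ha z]
  · refine .of_forall fun z => ?_
    have hc : Continuous fun a : E => |K (z - a) - K z| := by fun_prop
    simpa using hc.tendsto 0

theorem integral_abs_integral_mul_le [BorelSpace E] [SecondCountableTopology E] [SFinite μ]
    [μ.IsAddRightInvariant] {K w : E → ℝ} (hK : Integrable K μ) (hw : Integrable w μ)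
    (hw₀ : ∫ y, w y ∂μ = 0) :
    ∫ x, |∫ y, K (x - y) * w y ∂μ| ∂μ ≤ ∫ y, |w y| * translateL1Dist μ K y ∂μ := by
  set F : E × E → ℝ := fun p => (K (p.1 - p.2) - K p.1) * w p.2
  have hprod : Integrable (fun p : E × E => K p.1 * w p.2) (μ.prod μ) := hK.mul_prod hw
  have hshear : Integrable (fun p : E × E => K (p.1 - p.2) * w p.2) (μ.prod μ) :=
    ((measurePreserving_sub_prod μ μ).integrable_comp hprod.aestronglyMeasurable).mpr hprod
  have hF : Integrable F (μ.prod μ) := by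
    refine (hshear.sub hprod).congr (.of_forall fun p => ?_)
    simp only [F, Pi.sub_apply, sub_mul]
  have hpt : ∀ x, |∫ y, K (x - y) * w y ∂μ| ≤ ∫ y, |F (x, y)| ∂μ := by
    intro x
    by_cases hx : Integrable (fun y => K (x - y) * w y) μ
    · have : ∫ y, K (x - y) * w y ∂μ = ∫ y, F (x, y) ∂μ := by
        simp only [F, sub_mul]
        rw [integral_sub hx (hw.const_mul _), integral_const_mul, hw₀, mul_zero, sub_zero]
      rw [this]
      exact abs_integral_le_integral_abs
    · -- a non-integrable integrand has the junk integral `0`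
      rw [integral_undef hx, abs_zero]
      exact integral_nonneg fun _ => abs_nonneg _
  calc ∫ x, |∫ y, K (x - y) * w y ∂μ| ∂μ ≤ ∫ x, ∫ y, |F (x, y)| ∂μ ∂μ :=
        integral_mono_of_nonneg (.of_forall fun _ => abs_nonneg _)
          hF.norm.integral_prod_left (.of_forall hpt)
    _ = ∫ y, ∫ x, |F (x, y)| ∂μ ∂μ := integral_integral_swap hF.norm
    _ = ∫ y, |w y| * translateL1Dist μ K y ∂μ := by
        simp only [F, abs_mul, integral_mul_const, translateL1Dist]
        simp_rw [mul_comm]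

end TranslateL1Dist

section HeatKernel

variable {N : ℕ}

theorem continuous_heatKernel (N : ℕ) (t : ℝ) : Continuous (heatKernel N t) := by
  unfold heatKernel; fun_prop

theorem heatKernel_nonneg {t : ℝ} (ht : 0 ≤ t) (x : EuclideanSpace ℝ (Fin N)) :
    0 ≤ heatKernel N t x := by
  unfold heatKernel; positivity

theorem heatKernel_le {t : ℝ} (ht : 0 ≤ t) (x : EuclideanSpace ℝ (Fin N)) :
    heatKernel N t x ≤ (4 * π * t) ^ (-(N : ℝ) / 2) := by
  refine mul_le_of_le_one_right (by positivity) (exp_le_one_iff.2 ?_)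
  exact div_nonpos_of_nonpos_of_nonneg (neg_nonpos.2 (by positivity)) (by positivity)

theorem integral_heatKernel {t : ℝ} (ht : 0 < t) : ∫ x, heatKernel N t x = 1 := by
  have h4πt : 0 < 4 * π * t := by positivity
  have hG : heatKernel N t
      = fun x => (4 * π * t) ^ (-(N : ℝ) / 2) * exp (-(4 * t)⁻¹ * ‖x‖ ^ 2) := by
    ext x
    rw [heatKernel]
    congr 2
    ring
  rw [hG, integral_const_mul, GaussianFourier.integral_rexp_neg_mul_sq_norm (by positivity),
    finrank_euclideanSpace_fin, div_inv_eq_mul, show π * (4 * t) = 4 * π * t by ring, neg_div,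
    rpow_neg h4πt.le, inv_mul_cancel₀ (rpow_pos_of_pos h4πt _).ne']

theorem integrable_heatKernel {t : ℝ} (ht : 0 < t) : Integrable (heatKernel N t) :=
  .of_integral_ne_zero <| (integral_heatKernel ht).symm ▸ one_ne_zero

theorem heatKernel_eq_smul {t : ℝ} (ht : 0 < t) (x : EuclideanSpace ℝ (Fin N)) :
    heatKernel N t x = (√t ^ N)⁻¹ * heatKernel N 1 ((√t)⁻¹ • x) := by
  have hsqrt : t ^ ((N : ℝ) / 2) = √t ^ N := by
    rw [sqrt_eq_rpow, ← rpow_natCast, ← rpow_mul ht.le, one_div_mul_eq_div]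
  have hnorm : ‖(√t)⁻¹ • x‖ ^ 2 = ‖x‖ ^ 2 / t := by
    rw [norm_smul, norm_inv, norm_of_nonneg (sqrt_nonneg t), mul_pow, inv_pow, sq_sqrt ht.le,
      inv_mul_eq_div]
  unfold heatKernel
  rw [hnorm, mul_rpow (by positivity) ht.le, neg_div, rpow_neg ht.le, hsqrt]
  field_simp

theorem heatKernel_one_sub_le {a : EuclideanSpace ℝ (Fin N)} (ha : ‖a‖ ≤ 1)
    (z : EuclideanSpace ℝ (Fin N)) :
    heatKernel N 1 (z - a) ≤ 2 ^ ((N : ℝ) / 2) * exp (1 / 4) * heatKernel N 2 z := by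
  have hz : ‖z‖ ≤ ‖z - a‖ + 1 := by
    simpa [add_comm] using (norm_le_norm_add_norm_sub' z a).trans (add_le_add_left ha _)
  have hexp : exp (-‖z - a‖ ^ 2 / (4 * 1)) ≤ exp (1 / 4) * exp (-‖z‖ ^ 2 / (4 * 2)) := by
    rw [← exp_add, exp_le_exp]
    nlinarith [mul_self_le_mul_self (norm_nonneg z) hz, sq_nonneg (‖z - a‖ - 1)]
  have hconst :
      (4 * π * 1) ^ (-(N : ℝ) / 2) = 2 ^ ((N : ℝ) / 2) * (4 * π * 2) ^ (-(N : ℝ) / 2) := by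
    rw [neg_div, mul_one, mul_rpow (by positivity) zero_le_two, mul_left_comm,
      ← rpow_add two_pos, add_neg_cancel, rpow_zero, mul_one]
  unfold heatKernel
  rw [hconst]
  calc 2 ^ ((N : ℝ) / 2) * (4 * π * 2) ^ (-(N : ℝ) / 2) * exp (-‖z - a‖ ^ 2 / (4 * 1))
      ≤ 2 ^ ((N : ℝ) / 2) * (4 * π * 2) ^ (-(N : ℝ) / 2)
          * (exp (1 / 4) * exp (-‖z‖ ^ 2 / (4 * 2))) := by gcongr
    _ = _ := by ring

theorem translateL1Dist_heatKernel {t : ℝ} (ht : 0 < t) (y : EuclideanSpace ℝ (Fin N)) :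
    translateL1Dist volume (heatKernel N t) y
      = translateL1Dist volume (heatKernel N 1) ((√t)⁻¹ • y) := by
  rw [funext (heatKernel_eq_smul ht), translateL1Dist_const_mul,
    translateL1Dist_comp_smul _ (inv_nonneg.2 (sqrt_nonneg t)), finrank_euclideanSpace_fin,
    abs_of_nonneg (by positivity), inv_pow, inv_inv, ← mul_assoc,
    inv_mul_cancel₀ (pow_pos (sqrt_pos.2 ht) N).ne', one_mul]

theorem translateL1Dist_heatKernel_le {t : ℝ} (ht : 0 < t) (y : EuclideanSpace ℝ (Fin N)) :
    translateL1Dist volume (heatKernel N t) y ≤ 2 := by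
  have h := translateL1Dist_le (integrable_heatKernel ht) y
  simp_rw [abs_of_nonneg (heatKernel_nonneg ht.le _), integral_heatKernel ht, mul_one] at h
  exact h

theorem tendsto_translateL1Dist_heatKernel_one :
    Tendsto (translateL1Dist volume (heatKernel N 1)) (𝓝 0) (𝓝 0) := by
  refine tendsto_translateL1Dist_zero (continuous_heatKernel N 1)
    ((integrable_heatKernel two_pos).const_mul (2 ^ ((N : ℝ) / 2) * exp (1 / 4))) ?_
  filter_upwards [Metric.closedBall_mem_nhds 0 one_pos] with a ha z
  rw [abs_of_nonneg (heatKernel_nonneg zero_le_one _)]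
  exact heatKernel_one_sub_le (by simpa using ha) z

theorem tendsto_translateL1Dist_heatKernel (y : EuclideanSpace ℝ (Fin N)) :
    Tendsto (fun t => translateL1Dist volume (heatKernel N t) y) atTop (𝓝 0) := by
  have hscale : Tendsto (fun t : ℝ => (√t)⁻¹ • y) atTop (𝓝 0) := by
    simpa using (tendsto_inv_atTop_zero.comp tendsto_sqrt_atTop).smul_const y
  refine (tendsto_translateL1Dist_heatKernel_one.comp hscale).congr' ?_
  filter_upwards [eventually_gt_atTop 0] with t ht using (translateL1Dist_heatKernel ht y).symm

theorem tendsto_integral_mul_translateL1Dist_heatKernel {w : EuclideanSpace ℝ (Fin N) → ℝ}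
    (hw : Integrable w) :
    Tendsto (fun t => ∫ y, |w y| * translateL1Dist volume (heatKernel N t) y) atTop (𝓝 0) := by
  rw [← integral_zero (EuclideanSpace ℝ (Fin N)) ℝ]
  refine tendsto_integral_filter_of_dominated_convergence (fun y => |w y| * 2)
    (.of_forall fun t => hw.abs.aestronglyMeasurable.mul
      (stronglyMeasurable_translateL1Dist (continuous_heatKernel N t)).aestronglyMeasurable)
    ?_ (hw.abs.mul_const 2) (.of_forall fun y => ?_)
  · filter_upwards [eventually_gt_atTop 0] with t ht
    refine .of_forall fun y => ?_
    rw [norm_mul, norm_abs_eq_norm, norm_of_nonneg (translateL1Dist_nonneg _ _ _),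
      norm_eq_abs]
    exact mul_le_mul_of_nonneg_left (translateL1Dist_heatKernel_le ht y) (abs_nonneg _)
  · simpa using (tendsto_translateL1Dist_heatKernel y).const_mul |w y|

theorem heatSol_sub {t : ℝ} (ht : 0 ≤ t) {u₀ v₀ : EuclideanSpace ℝ (Fin N) → ℝ}
    (hu₀ : Integrable u₀) (hv₀ : Integrable v₀) (x : EuclideanSpace ℝ (Fin N)) :
    heatSol N (u₀ - v₀) x t = heatSol N u₀ x t - heatSol N v₀ x t := by
  have hmeas : AEStronglyMeasurable (fun y => heatKernel N t (x - y)) :=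
    ((continuous_heatKernel N t).comp (continuous_sub_left x)).aestronglyMeasurable
  have hbdd : ∀ᵐ y, ‖heatKernel N t (x - y)‖ ≤ (4 * π * t) ^ (-(N : ℝ) / 2) :=
    .of_forall fun y => (norm_of_nonneg (heatKernel_nonneg ht _)).trans_le (heatKernel_le ht _)
  simp only [heatSol, Pi.sub_apply, mul_sub]
  exact integral_sub (hu₀.bdd_mul hmeas hbdd) (hv₀.bdd_mul hmeas hbdd)

end HeatKernel

theorem heat_mixing_L1_general (N : ℕ)
    (u₀ v₀ : EuclideanSpace ℝ (Fin N) → ℝ)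
    (hu₀ : Integrable u₀) (hv₀ : Integrable v₀)
    (hmass : ∫ x, u₀ x = ∫ x, v₀ x) :
    Tendsto (fun t : ℝ => ∫ x, |heatSol N u₀ x t - heatSol N v₀ x t|)
      atTop (nhds 0) := by
  have hmass₀ : ∫ y, (u₀ - v₀) y = 0 := by
    simp only [Pi.sub_apply]
    rw [integral_sub hu₀ hv₀, hmass, sub_self]
  have hbound : ∀ᶠ t in atTop, ∫ x, |heatSol N u₀ x t - heatSol N v₀ x t|
      ≤ ∫ y, |(u₀ - v₀) y| * translateL1Dist volume (heatKernel N t) y := by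
    filter_upwards [eventually_gt_atTop 0] with t ht
    simp only [← heatSol_sub ht.le hu₀ hv₀]
    exact integral_abs_integral_mul_le (integrable_heatKernel ht) (hu₀.sub hv₀) hmass₀
  exact squeeze_zero' (.of_forall fun t => integral_nonneg fun x => abs_nonneg _) hbound
    (tendsto_integral_mul_translateL1Dist_heatKernel (hu₀.sub hv₀))

/-- Mixing property: two solutions of the heat equation whose initial data have
the same mass approach each other in `L¹` as `t → ∞`. -/
theorem heat_mixing_L1 (N : ℕ) (hN : 1 ≤ N)
    (u₀ v₀ : EuclideanSpace ℝ (Fin N) → ℝ)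
    (hu₀ : Integrable u₀) (hv₀ : Integrable v₀)
    (hmass : ∫ x, u₀ x = ∫ x, v₀ x) :
    Tendsto (fun t : ℝ => ∫ x, |heatSol N u₀ x t - heatSol N v₀ x t|)
      atTop (nhds 0) :=
  heat_mixing_L1_general N u₀ v₀ hu₀ hv₀ hmass
end

section
/- Let N ≥ 1 and let u₀ ∈ L¹(ℝ^N) have finite first absolute moment 𝒩₁ = ∫_{ℝ^N} |y| |u₀(y)| dy < ∞. Let M = ∫_{ℝ^N} u₀(x) dx and u(x,t) = ∫_{ℝ^N} G_t(x−y) u₀(y) dy. Then there is a constant C > 0 depending only on N such that for all t > 0, ‖u(·,t) − M·G_t‖_{L¹(ℝ^N)} ≤ C·𝒩₁·t^{−1/2}. -/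
/-!
Write `u(·,t) − M·G_t = ∫ (G_t(· − y) − G_t) u₀(y) dy`. By Minkowski's integral inequality its
`L¹` norm is at most `∫ ‖G_t(· − y) − G_t‖₁ |u₀(y)| dy`, so it suffices that translating the heat
kernel by `y` moves it by at most `C |y| t^{-1/2}` in `L¹`. Parabolic scaling reduces this to
`t = 1` and a shift by `y/√t`, and for the fixed Gaussian `G_1` the mean value theorem gives
`|G_1(z − h) − G_1(z)| ≤ Φ(z)|h|` for `|h| ≤ 1`, with `Φ` an integrable Gaussian of larger width,
while shifts with `|h| ≥ 1` cost at most `2‖G_1‖₁ ≤ 2|h|`.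
-/

open MeasureTheory Real Filter

section Convolution

variable {G : Type*} [AddGroup G] [MeasurableSpace G] [MeasurableAdd₂ G] [MeasurableNeg G]
  {μ : Measure G} [SFinite μ] [μ.IsAddRightInvariant]

theorem integral_abs_conv_sub_integral_mul_le {K u : G → ℝ} (hK : Integrable K μ)
    (hu : Integrable u μ) :
    ∫ x, |∫ y, K (x - y) * u y ∂μ - (∫ y, u y ∂μ) * K x| ∂μ ≤
      ∫ y, (∫ x, |K (x - y) - K x| ∂μ) * |u y| ∂μ := by
  set F : G × G → ℝ := fun p => (K (p.1 - p.2) - K p.1) * u p.2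
  have hF : Integrable F (μ.prod μ) := by
    refine ((hu.convolution_integrand (ContinuousLinearMap.mul ℝ ℝ) hK).sub
      (hK.mul_prod hu)).congr (Eventually.of_forall fun p => ?_)
    simp only [F, Pi.sub_apply, ContinuousLinearMap.mul_apply']
    ring
  have hpt : ∀ᵐ x ∂μ,
      ∫ y, K (x - y) * u y ∂μ - (∫ y, u y ∂μ) * K x = ∫ y, F (x, y) ∂μ := by
    filter_upwards [hF.prod_right_ae] with x hFx
    have hconv : Integrable (fun y => K (x - y) * u y) μ :=
      (hFx.add (hu.const_mul (K x))).congr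
        (Eventually.of_forall fun y => by simp only [F, Pi.add_apply]; ring)
    rw [← integral_mul_const, ← integral_sub hconv (hu.mul_const _)]
    exact integral_congr_ae (Eventually.of_forall fun y => by simp only [F]; ring)
  calc ∫ x, |∫ y, K (x - y) * u y ∂μ - (∫ y, u y ∂μ) * K x| ∂μ
      = ∫ x, ‖∫ y, F (x, y) ∂μ‖ ∂μ :=
        integral_congr_ae (hpt.mono fun x hx => by simp only [hx, Real.norm_eq_abs])
    _ ≤ ∫ x, ∫ y, ‖F (x, y)‖ ∂μ ∂μ :=
        integral_mono_of_nonneg (Eventually.of_forall fun x => norm_nonneg _)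
          hF.integral_norm_prod_left
          (Eventually.of_forall fun x => norm_integral_le_integral_norm _)
    _ = ∫ y, ∫ x, ‖F (x, y)‖ ∂μ ∂μ := integral_integral_swap hF.norm
    _ = ∫ y, (∫ x, |K (x - y) - K x| ∂μ) * |u y| ∂μ := by
        simp only [F, norm_mul, Real.norm_eq_abs, integral_mul_const]

end Convolution

section Translation

variable {E : Type*} [NormedAddCommGroup E] [NormedSpace ℝ E]
  {f : E → ℝ} {f' : E → E →L[ℝ] ℝ} {Φ : E → ℝ}

theorem abs_sub_translate_le_of_norm_fderiv_le (hf : ∀ x, HasFDerivAt f (f' x) x)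
    (hΦ : ∀ z u, ‖u - z‖ ≤ 1 → ‖f' u‖ ≤ Φ z) {h : E} (hh : ‖h‖ ≤ 1) (z : E) :
    |f (z - h) - f z| ≤ Φ z * ‖h‖ := by
  have hseg : segment ℝ (z - h) z ⊆ Metric.closedBall z 1 :=
    (convex_closedBall z 1).segment_subset (by simpa [dist_eq_norm] using hh)
      (Metric.mem_closedBall_self zero_le_one)
  have := (convex_segment (z - h) z).norm_image_sub_le_of_norm_hasFDerivWithin_le
    (fun u _ => (hf u).hasFDerivWithinAt)
    (fun u hu => hΦ z u (by simpa [dist_eq_norm] using hseg hu))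
    (right_mem_segment ℝ (z - h) z) (left_mem_segment ℝ (z - h) z)
  simpa [Real.norm_eq_abs] using this

variable [MeasurableSpace E] [BorelSpace E] {μ : Measure E} [μ.IsAddRightInvariant]

theorem integral_abs_sub_translate_le_of_norm_fderiv_le (hf : ∀ x, HasFDerivAt f (f' x) x)
    (hΦ : ∀ z u, ‖u - z‖ ≤ 1 → ‖f' u‖ ≤ Φ z) (hf_int : Integrable f μ)
    (hΦ_int : Integrable Φ μ) (h : E) :
    ∫ z, |f (z - h) - f z| ∂μ ≤ (∫ z, Φ z ∂μ + 2 * ∫ z, |f z| ∂μ) * ‖h‖ := by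
  have hΦ_nonneg : 0 ≤ ∫ z, Φ z ∂μ :=
    integral_nonneg fun z => (norm_nonneg _).trans (hΦ z z (by simp))
  have hf_nonneg : 0 ≤ ∫ z, |f z| ∂μ := integral_nonneg fun z => abs_nonneg _
  rcases le_total ‖h‖ 1 with hh | hh
  · calc ∫ z, |f (z - h) - f z| ∂μ ≤ ∫ z, Φ z * ‖h‖ ∂μ :=
          integral_mono_of_nonneg (Eventually.of_forall fun z => abs_nonneg _)
            (hΦ_int.mul_const _)
            (Eventually.of_forall (abs_sub_translate_le_of_norm_fderiv_le hf hΦ hh))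
      _ ≤ (∫ z, Φ z ∂μ + 2 * ∫ z, |f z| ∂μ) * ‖h‖ := by
          rw [integral_mul_const]; gcongr; linarith
  · calc ∫ z, |f (z - h) - f z| ∂μ ≤ ∫ z, (|f (z - h)| + |f z|) ∂μ :=
          integral_mono_of_nonneg (Eventually.of_forall fun z => abs_nonneg _)
            ((hf_int.comp_sub_right h).abs.add hf_int.abs)
            (Eventually.of_forall fun z => abs_sub _ _)
      _ = 2 * ∫ z, |f z| ∂μ := by
          rw [integral_add (hf_int.comp_sub_right h).abs hf_int.abs,
            integral_sub_right_eq_self (fun z => |f z|) h, two_mul]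
      _ ≤ (∫ z, Φ z ∂μ + 2 * ∫ z, |f z| ∂μ) * ‖h‖ := by nlinarith

end Translation

theorem integral_abs_dilate_translate_sub {E : Type*} [NormedAddCommGroup E] [NormedSpace ℝ E]
    [MeasurableSpace E] [BorelSpace E] [FiniteDimensional ℝ E] (μ : Measure E)
    [μ.IsAddHaarMeasure] (g : E → ℝ) {s : ℝ} (hs : 0 < s) (y : E) :
    ∫ x, |(s ^ Module.finrank ℝ E)⁻¹ * g (s⁻¹ • (x - y)) -
        (s ^ Module.finrank ℝ E)⁻¹ * g (s⁻¹ • x)| ∂μ =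
      ∫ z, |g (z - s⁻¹ • y) - g z| ∂μ := by
  have hd : 0 < s ^ Module.finrank ℝ E := pow_pos hs _
  simp_rw [← mul_sub, abs_mul, abs_of_pos (inv_pos.2 hd), smul_sub]
  rw [integral_const_mul,
    Measure.integral_comp_inv_smul_of_nonneg μ (fun z => |g (z - s⁻¹ • y) - g z|) hs.le,
    smul_eq_mul, inv_mul_cancel_left₀ hd.ne']

theorem integrable_exp_neg_mul_sq_norm {V : Type*} [NormedAddCommGroup V]
    [InnerProductSpace ℝ V] [FiniteDimensional ℝ V] [MeasurableSpace V] [BorelSpace V]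
    {b : ℝ} (hb : 0 < b) : Integrable fun v : V => exp (-b * ‖v‖ ^ 2) :=
  Integrable.of_integral_ne_zero <| by
    rw [GaussianFourier.integral_rexp_neg_mul_sq_norm hb]; positivity

theorem mul_exp_neg_sq_div_four_le {a b : ℝ} (ha : 0 ≤ a) (hb : 0 ≤ b) (hab : b - 1 ≤ a) :
    a * exp (-a ^ 2 / 4) ≤ 8 * exp 1 * exp (-b ^ 2 / 32) := by
  have hpeak : a * exp (-a ^ 2 / 8) ≤ 8 := by
    rw [neg_div, exp_neg, mul_inv_le_iff₀' (exp_pos _)]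
    nlinarith [add_one_le_exp (a ^ 2 / 8)]
  have htail : -a ^ 2 / 8 ≤ 1 + -b ^ 2 / 32 := by
    rcases le_total b 2 with h | h
    · nlinarith
    · nlinarith [sq_nonneg (a - b + 1)]
  calc a * exp (-a ^ 2 / 4) = a * exp (-a ^ 2 / 8) * exp (-a ^ 2 / 8) := by
        rw [mul_assoc, ← exp_add]; ring_nf
    _ ≤ 8 * exp (1 + -b ^ 2 / 32) := by gcongr
    _ = 8 * exp 1 * exp (-b ^ 2 / 32) := by rw [exp_add, mul_assoc]

namespace heatKernel

variable {N : ℕ}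

theorem eq_mul_exp_neg_mul_sq_norm (t : ℝ) :
    heatKernel N t = fun x => (4 * π * t) ^ (-(N : ℝ) / 2) * exp (-(4 * t)⁻¹ * ‖x‖ ^ 2) := by
  ext x
  rw [heatKernel]
  congr 2
  ring

theorem nonneg {t : ℝ} (ht : 0 ≤ t) (x : EuclideanSpace ℝ (Fin N)) : 0 ≤ heatKernel N t x := by
  rw [heatKernel]; positivity

theorem integrable {t : ℝ} (ht : 0 < t) : Integrable (heatKernel N t) := by
  rw [eq_mul_exp_neg_mul_sq_norm]
  exact (integrable_exp_neg_mul_sq_norm (by positivity)).const_mul _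

theorem integral_eq_one {t : ℝ} (ht : 0 < t) : ∫ x, heatKernel N t x = 1 := by
  rw [eq_mul_exp_neg_mul_sq_norm, integral_const_mul,
    GaussianFourier.integral_rexp_neg_mul_sq_norm (by positivity), finrank_euclideanSpace_fin,
    div_inv_eq_mul, show π * (4 * t) = 4 * π * t by ring, ← rpow_add (by positivity), neg_div,
    neg_add_cancel, rpow_zero]

theorem hasFDerivAt (t : ℝ) (x : EuclideanSpace ℝ (Fin N)) :
    HasFDerivAt (heatKernel N t) ((-(2 * t)⁻¹ * heatKernel N t x) • innerSL ℝ x) x := by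
  have h := (((hasStrictFDerivAt_norm_sq x).hasFDerivAt.const_mul (-(4 * t)⁻¹)).exp).const_mul
    ((4 * π * t) ^ (-(N : ℝ) / 2))
  rw [← eq_mul_exp_neg_mul_sq_norm] at h
  refine h.congr_fderiv ?_
  ext v
  simp only [smul_apply, innerSL_apply_apply, smul_eq_mul, eq_mul_exp_neg_mul_sq_norm]
  ring

theorem norm_fderiv_one_le {z u : EuclideanSpace ℝ (Fin N)} (hu : ‖u - z‖ ≤ 1) :
    ‖(-(2 * 1)⁻¹ * heatKernel N 1 u) • innerSL ℝ u‖ ≤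
      4 * exp 1 * (4 * π) ^ (-(N : ℝ) / 2) * exp (-‖z‖ ^ 2 / 32) := by
  have hzu : ‖z‖ - 1 ≤ ‖u‖ := by linarith [norm_sub_norm_le z u, norm_sub_rev z u]
  calc ‖(-(2 * 1)⁻¹ * heatKernel N 1 u) • innerSL ℝ u‖
      = 2⁻¹ * (4 * π) ^ (-(N : ℝ) / 2) * (‖u‖ * exp (-‖u‖ ^ 2 / 4)) := by
        rw [norm_smul, innerSL_apply_norm, norm_mul, norm_neg,
          Real.norm_of_nonneg (nonneg zero_le_one u), heatKernel]
        norm_num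
        ring
    _ ≤ 2⁻¹ * (4 * π) ^ (-(N : ℝ) / 2) * (8 * exp 1 * exp (-‖z‖ ^ 2 / 32)) := by
        gcongr ?_ * ?_
        exact mul_exp_neg_sq_div_four_le (norm_nonneg u) (norm_nonneg z) hzu
    _ = 4 * exp 1 * (4 * π) ^ (-(N : ℝ) / 2) * exp (-‖z‖ ^ 2 / 32) := by ring

theorem eq_dilate {t : ℝ} (ht : 0 < t) (x : EuclideanSpace ℝ (Fin N)) :
    heatKernel N t x = (√t ^ N)⁻¹ * heatKernel N 1 ((√t)⁻¹ • x) := by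
  have hnorm : ‖(√t)⁻¹ • x‖ ^ 2 = ‖x‖ ^ 2 / t := by
    rw [norm_smul, mul_pow, norm_inv, Real.norm_of_nonneg (sqrt_nonneg t), inv_pow,
      sq_sqrt ht.le, inv_mul_eq_div]
  have hpow : (√t ^ N)⁻¹ = t ^ (-(N : ℝ) / 2) := by
    rw [sqrt_eq_rpow, ← rpow_natCast, ← rpow_mul ht.le, ← rpow_neg ht.le]
    ring_nf
  rw [heatKernel, heatKernel, hnorm, hpow, mul_one, mul_rpow (by positivity) ht.le]
  field_simp

theorem integral_abs_translate_sub_eq {t : ℝ} (ht : 0 < t) (y : EuclideanSpace ℝ (Fin N)) :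
    ∫ x, |heatKernel N t (x - y) - heatKernel N t x| =
      ∫ z, |heatKernel N 1 (z - (√t)⁻¹ • y) - heatKernel N 1 z| := by
  simp_rw [eq_dilate ht]
  simpa only [finrank_euclideanSpace_fin] using
    integral_abs_dilate_translate_sub volume (heatKernel N 1) (sqrt_pos.2 ht) y

theorem exists_integral_abs_translate_sub_le (N : ℕ) :
    ∃ C, 0 < C ∧ ∀ t, 0 < t → ∀ y : EuclideanSpace ℝ (Fin N),
      ∫ x, |heatKernel N t (x - y) - heatKernel N t x| ≤ C * ‖y‖ * t ^ (-(1 : ℝ) / 2) := by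
  set Φ : EuclideanSpace ℝ (Fin N) → ℝ :=
    fun z => 4 * exp 1 * (4 * π) ^ (-(N : ℝ) / 2) * exp (-‖z‖ ^ 2 / 32)
  have hΦ : Integrable Φ := by
    have := (integrable_exp_neg_mul_sq_norm (V := EuclideanSpace ℝ (Fin N))
      (b := 32⁻¹) (by norm_num)).const_mul (4 * exp 1 * (4 * π) ^ (-(N : ℝ) / 2))
    refine this.congr (Eventually.of_forall fun z => ?_)
    simp only [Φ, neg_mul, inv_mul_eq_div, neg_div]
  have hG₁ : ∫ z, |heatKernel N 1 z| = 1 := by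
    simp_rw [abs_of_nonneg (nonneg zero_le_one _)]
    exact integral_eq_one one_pos
  refine ⟨(∫ z, Φ z) + 2,
    add_pos_of_nonneg_of_pos (integral_nonneg fun z => by positivity) two_pos, fun t ht y => ?_⟩
  have hshift := integral_abs_sub_translate_le_of_norm_fderiv_le (hasFDerivAt 1)
    (fun z u hu => norm_fderiv_one_le hu) (integrable one_pos) hΦ ((√t)⁻¹ • y)
  rw [hG₁, mul_one] at hshift
  rw [integral_abs_translate_sub_eq ht, mul_assoc]
  convert hshift using 2
  rw [norm_smul, norm_inv, Real.norm_of_nonneg (sqrt_nonneg t), sqrt_eq_rpow, ← rpow_neg ht.le]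
  ring_nf

end heatKernel

theorem heat_convergence_rate_first_moment_L1_general (N : ℕ) :
    ∃ C : ℝ, 0 < C ∧ ∀ u₀ : EuclideanSpace ℝ (Fin N) → ℝ,
      Integrable u₀ →
      Integrable (fun y => ‖y‖ * |u₀ y|) →
      ∀ t : ℝ, 0 < t →
        (∫ x, |heatSol N u₀ x t - (∫ y, u₀ y) * heatKernel N t x|) ≤
          C * (∫ y, ‖y‖ * |u₀ y|) * t ^ (-(1 : ℝ) / 2) := by
  obtain ⟨C, hC, hK⟩ := heatKernel.exists_integral_abs_translate_sub_le N
  refine ⟨C, hC, fun u₀ hu hmom t ht => ?_⟩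
  calc ∫ x, |heatSol N u₀ x t - (∫ y, u₀ y) * heatKernel N t x|
      ≤ ∫ y, (∫ x, |heatKernel N t (x - y) - heatKernel N t x|) * |u₀ y| :=
        integral_abs_conv_sub_integral_mul_le (heatKernel.integrable ht) hu
    _ ≤ ∫ y, C * t ^ (-(1 : ℝ) / 2) * (‖y‖ * |u₀ y|) := by
        refine integral_mono_of_nonneg
          (Eventually.of_forall fun y => by positivity) (hmom.const_mul _)
          (Eventually.of_forall fun y => ?_)
        calc (∫ x, |heatKernel N t (x - y) - heatKernel N t x|) * |u₀ y|
            ≤ C * ‖y‖ * t ^ (-(1 : ℝ) / 2) * |u₀ y| := by gcongr; exact hK t ht y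
          _ = C * t ^ (-(1 : ℝ) / 2) * (‖y‖ * |u₀ y|) := by ring
    _ = C * (∫ y, ‖y‖ * |u₀ y|) * t ^ (-(1 : ℝ) / 2) := by rw [integral_const_mul]; ring

/-- Quantitative `L¹` convergence for data with finite first absolute moment:
`‖u(·,t) − M·G_t‖_{L¹} ≤ C·𝒩₁·t^{-1/2}` with `C = C(N)`. -/
theorem heat_convergence_rate_first_moment_L1 (N : ℕ) (hN : 1 ≤ N) :
    ∃ C : ℝ, 0 < C ∧ ∀ u₀ : EuclideanSpace ℝ (Fin N) → ℝ,
      Integrable u₀ →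
      Integrable (fun y => ‖y‖ * |u₀ y|) →
      ∀ t : ℝ, 0 < t →
        (∫ x, |heatSol N u₀ x t - (∫ y, u₀ y) * heatKernel N t x|) ≤
          C * (∫ y, ‖y‖ * |u₀ y|) * t ^ (-(1 : ℝ) / 2) :=
  heat_convergence_rate_first_moment_L1_general N
end
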